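/- arXiv:1507.03391 — 2 statements merged into one kernel-verified Lean document; each statement's English description precedes it below -/
import Mathlib

section
/- Let (b_n), (T_n) be nonnegative sequences and (c_n) a sequence in (0,1). If ∑_{n=0}^∞ b_n T_n < ∞ and ∑_{n=0}^∞ ln(c_n) = -∞, then ∑_{n=0}^∞ ln( e^{2 b_n T_n} (c_n + b_n T_n) ) = -∞. -/
/-!
Writing `x = b T ≥ 0`, the `n`-th term is `2x + log (c + x)`. Since `c + x ≤ max c ½ · (1 + 2x)`,
each term is at most `4x + max (log c) (-log 2)`. The `x`-part has bounded partial sums, while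
the truncated logarithms `max (log c) (-log 2) ≤ 0` cannot be summable: they would tend to `0`,
hence eventually agree with `log c`, making `∑ log c` convergent.
-/

open Filter Finset Real

theorem Real.log_add_le_max_log_add {c x : ℝ} (hc : 0 < c) (hx : 0 ≤ x) :
    log (c + x) ≤ max (log c) (-log 2) + 2 * x := by
  have hlog_le : ∀ d, 0 < d → c + x ≤ d * (1 + 2 * x) → log (c + x) ≤ log d + 2 * x := by
    intro d hd h
    have hexp : 1 + 2 * x ≤ exp (2 * x) := by linarith [add_one_le_exp (2 * x)]
    calc log (c + x) ≤ log (d * exp (2 * x)) :=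
          log_le_log (by positivity) (h.trans (by gcongr))
      _ = log d + 2 * x := by rw [log_mul hd.ne' (exp_ne_zero _), log_exp]
  rcases le_total (1 / 2) c with h | h
  · exact (hlog_le c hc (by nlinarith)).trans (by gcongr; exact le_max_left _ _)
  · have h' := hlog_le (1 / 2) (by norm_num) (by linarith)
    rw [one_div, log_inv] at h'
    exact h'.trans (by gcongr; exact le_max_right _ _)

theorem Summable.of_max_const {ι : Type*} {f : ι → ℝ} {a : ℝ} (ha : a < 0)
    (h : Summable fun i => max (f i) a) : Summable f := by
  refine h.congr_cofinite ?_
  filter_upwards [h.tendsto_cofinite_zero.eventually (eventually_gt_nhds ha)] with i hi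
  exact max_eq_left ((lt_max_iff.mp hi).resolve_right (lt_irrefl a)).le

theorem tendsto_sum_range_atBot_of_nonpos {f : ℕ → ℝ} (hf : ∀ n, f n ≤ 0) (h : ¬Summable f) :
    Tendsto (fun n => ∑ i ∈ range n, f i) atTop atBot := by
  have hneg := (not_summable_iff_tendsto_nat_atTop_of_nonneg (f := fun n => -f n)
    fun n => neg_nonneg.2 (hf n)).1 (by rwa [summable_neg_iff])
  simpa only [Function.comp_def, sum_neg_distrib, neg_neg] using tendsto_neg_atTop_atBot.comp hneg

theorem sum_log_general_diverges (b T c : ℕ → ℝ) (hb : ∀ n, 0 ≤ b n) (hT : ∀ n, 0 ≤ T n)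
    (hc : ∀ n, c n ∈ Set.Ioo (0 : ℝ) 1)
    (hsum : Summable (fun n => b n * T n))
    (hlog : Tendsto (fun n => ∑ p ∈ Finset.range (n + 1), Real.log (c p)) atTop atBot) :
    Tendsto
      (fun n => ∑ p ∈ Finset.range (n + 1),
        Real.log (Real.exp (2 * b p * T p) * (c p + b p * T p))) atTop atBot := by
  set x := fun p => b p * T p
  set m := fun p => max (log (c p)) (-log 2)
  have hx p : 0 ≤ x p := mul_nonneg (hb p) (hT p)
  have hterm p : log (exp (2 * b p * T p) * (c p + b p * T p)) ≤ 4 * x p + m p := by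
    rw [log_mul (exp_ne_zero _) (by linarith [(hc p).1, hx p]), log_exp, mul_assoc]
    linarith [log_add_le_max_log_add (hc p).1 (hx p)]
  have hm_div : Tendsto (fun n => ∑ p ∈ range n, m p) atTop atBot := by
    refine tendsto_sum_range_atBot_of_nonpos
      (fun p => max_le (log_neg (hc p).1 (hc p).2).le (by simp [log_nonneg])) fun hm => ?_
    have hc_sum := hm.of_max_const (neg_lt_zero.2 (log_pos one_lt_two))
    exact not_tendsto_atBot_of_tendsto_nhds
      (hc_sum.hasSum.tendsto_sum_nat.comp (tendsto_add_atTop_nat 1)) hlog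
  have hdiv : Tendsto (fun n => ∑ p ∈ range n, log (exp (2 * b p * T p) * (c p + b p * T p)))
      atTop atBot := by
    refine tendsto_atBot_mono (fun n => ?_)
      (tendsto_atBot_add_const_left _ (4 * ∑' p, x p) hm_div)
    calc ∑ p ∈ range n, log (exp (2 * b p * T p) * (c p + b p * T p))
        ≤ ∑ p ∈ range n, (4 * x p + m p) := sum_le_sum fun p _ => hterm p
      _ = 4 * ∑ p ∈ range n, x p + ∑ p ∈ range n, m p := by rw [sum_add_distrib, mul_sum]
      _ ≤ 4 * ∑' p, x p + ∑ p ∈ range n, m p := by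
          gcongr; exact hsum.sum_le_tsum _ fun p _ => hx p
  exact hdiv.comp (tendsto_add_atTop_nat 1)
end

section
/- Let (b_n), (T_n) be nonnegative sequences and (c_n) a sequence in (0,1). If ∑_{n=0}^∞ b_n T_n < ∞ and ∑_{n=0}^∞ ln(c_n) = -∞, then ∑_{n=0}^∞ ln(c_n + b_n T_n) = -∞. -/
/-!
For `x ≥ 0` one has `log (c + x) ≤ log (max c (1/2)) + 2 x`, so the summable perturbation
shifts the partial sums by at most `2 ∑ x`, and it suffices that `∑ log (max c_n (1/2)) = -∞`.
These terms are nonpositive; if their series converged, they would tend to `0`, forcing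
`c_n > 1/2` and hence `log (max c_n (1/2)) = log c_n` eventually, so `∑ log c_n` would
converge as well.
-/

open Filter Finset

namespace Real

theorem log_add_le_log_add_div {a t : ℝ} (ha : 0 < a) (ht : 0 ≤ t) :
    log (a + t) ≤ log a + t / a := by
  have h := log_le_sub_one_of_pos (show 0 < (a + t) / a by positivity)
  rw [log_div (by positivity) ha.ne', add_div, div_self ha.ne'] at h
  linarith

theorem log_add_le_log_max_half_add {c x : ℝ} (hc : 0 < c) (hx : 0 ≤ x) :
    log (c + x) ≤ log (max c (1 / 2)) + 2 * x := by
  have hm : (1 / 2 : ℝ) ≤ max c (1 / 2) := le_max_right _ _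
  calc log (c + x) ≤ log (max c (1 / 2) + x) :=
        log_le_log (by positivity) (by gcongr; exact le_max_left _ _)
    _ ≤ log (max c (1 / 2)) + x / max c (1 / 2) :=
        log_add_le_log_add_div (by positivity) hx
    _ ≤ log (max c (1 / 2)) + 2 * x := by
        gcongr
        rw [div_le_iff₀ (by positivity)]
        nlinarith

end Real

open Real

theorem Summable.not_tendsto_sum_range_atBot {f : ℕ → ℝ} (hf : Summable f) :
    ¬Tendsto (fun n => ∑ p ∈ range n, f p) atTop atBot :=
  not_tendsto_atBot_of_tendsto_nhds hf.hasSum.tendsto_sum_nat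

theorem not_summable_log_max_half {c : ℕ → ℝ}
    (hlog : Tendsto (fun n => ∑ p ∈ range n, log (c p)) atTop atBot) :
    ¬Summable (fun p => log (max (c p) (1 / 2))) := by
  intro hs
  have hlarge : ∀ᶠ p in atTop, 1 / 2 < c p := by
    have hhalf : log (1 / 2) < 0 := log_neg (by norm_num) (by norm_num)
    filter_upwards [hs.tendsto_atTop_zero.eventually (lt_mem_nhds hhalf)] with p hp
    by_contra! h
    rw [max_eq_right h] at hp
    exact hp.false
  refine (hs.congr_atTop ?_).not_tendsto_sum_range_atBot hlog
  filter_upwards [hlarge] with p hp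
  rw [max_eq_left hp.le]

theorem tendsto_sum_log_max_half_atBot {c : ℕ → ℝ} (hc : ∀ n, c n ≤ 1)
    (hlog : Tendsto (fun n => ∑ p ∈ range n, log (c p)) atTop atBot) :
    Tendsto (fun n => ∑ p ∈ range n, log (max (c p) (1 / 2))) atTop atBot := by
  have hnonneg : ∀ p, 0 ≤ -log (max (c p) (1 / 2)) := fun p =>
    neg_nonneg.2 (log_nonpos (by positivity) (max_le (hc p) (by norm_num)))
  have h := (not_summable_iff_tendsto_nat_atTop_of_nonneg hnonneg).1
    (fun hs => not_summable_log_max_half hlog (by simpa only [neg_neg] using hs.neg))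
  simpa only [sum_neg_distrib, tendsto_neg_atTop_iff] using h

theorem tendsto_sum_log_add_atBot {c x : ℕ → ℝ} (hc : ∀ n, c n ∈ Set.Ioc 0 1)
    (hx : ∀ n, 0 ≤ x n) (hsum : Summable x)
    (hlog : Tendsto (fun n => ∑ p ∈ range n, log (c p)) atTop atBot) :
    Tendsto (fun n => ∑ p ∈ range n, log (c p + x p)) atTop atBot := by
  refine tendsto_atBot_mono (fun n => ?_) <| tendsto_atBot_add_const_right _ (2 * ∑' p, x p)
    (tendsto_sum_log_max_half_atBot (fun n => (hc n).2) hlog)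
  calc ∑ p ∈ range n, log (c p + x p)
      ≤ ∑ p ∈ range n, (log (max (c p) (1 / 2)) + 2 * x p) :=
        sum_le_sum fun p _ => log_add_le_log_max_half_add (hc p).1 (hx p)
    _ ≤ ∑ p ∈ range n, log (max (c p) (1 / 2)) + 2 * ∑' p, x p := by
        rw [sum_add_distrib, ← mul_sum]
        gcongr
        exact hsum.sum_le_tsum _ fun p _ => hx p

theorem sum_log_shift_diverges_of_sum_log_c (b T c : ℕ → ℝ) (hb : ∀ n, 0 ≤ b n)
    (hT : ∀ n, 0 ≤ T n) (hc : ∀ n, c n ∈ Set.Ioo (0 : ℝ) 1)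
    (hsum : Summable (fun n => b n * T n))
    (hlog : Tendsto (fun n => ∑ p ∈ Finset.range (n + 1), Real.log (c p)) atTop atBot) :
    Tendsto (fun n => ∑ p ∈ Finset.range (n + 1),
        Real.log (c p + b p * T p)) atTop atBot := by
  refine (tendsto_add_atTop_iff_nat 1).2 <| tendsto_sum_log_add_atBot
    (fun n => Set.Ioo_subset_Ioc_self (hc n)) (fun n => mul_nonneg (hb n) (hT n)) hsum ?_
  exact (tendsto_add_atTop_iff_nat 1).1 hlog
end
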